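/- arXiv:1906.10566 — 5 statements merged into one kernel-verified Lean document; each statement's English description precedes it below -/
import Mathlib

section
/- For every even natural number ε ≥ 2 and every odd natural number q ≥ 1, there exists k ∈ ℕ such that the k-th iterate of the Collatz function T applied to 2^ε · q + 1 equals 3^(ε/2) · q + 1. -/
def T (n : ℕ) : ℕ := if n % 2 = 0 then n / 2 else 3 * n + 1

lemma Tstep (p : ℕ) : T (T (T (4 * p + 1))) = 3 * p + 1 := by
  simp only [T]
  split_ifs <;> omega

lemma Titer (j : ℕ) : ∀ q : ℕ, T^[3 * j] (2 ^ (2 * j) * q + 1) = 3 ^ j * q + 1 := by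
  induction j with
  | zero => simp
  | succ n ih =>
    intro q
    have h1 : 2 ^ (2 * (n + 1)) * q + 1 = 4 * (2 ^ (2 * n) * q) + 1 := by ring
    have h2 : 3 * (n + 1) = 3 * n + 3 := by ring
    rw [h1, h2, Function.iterate_add_apply]
    have h3 : T^[3] (4 * (2 ^ (2 * n) * q) + 1) = 2 ^ (2 * n) * (3 * q) + 1 := by
      show T (T (T _)) = _
      rw [Tstep]; ring
    rw [h3, ih (3 * q)]
    ring

theorem stmt5 (ε q : ℕ) (hε : 2 ≤ ε) (heven : ε % 2 = 0) (hq : q % 2 = 1) :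
    ∃ k : ℕ, T^[k] (2 ^ ε * q + 1) = 3 ^ (ε / 2) * q + 1 := by
  refine ⟨3 * (ε / 2), ?_⟩
  have h : ε = 2 * (ε / 2) := by omega
  rw [show ε / 2 = 2 * (ε / 2) / 2 by omega, ← h]
  rw [h, Nat.mul_div_cancel_left _ (by norm_num : 0 < 2)]; exact Titer (ε / 2) q
end

section
/- For every odd natural number ε ≥ 1 and every odd natural number q ≥ 1, there exists k ∈ ℕ such that T^k(2^ε · q + 1) = 3^((ε-1)/2 + 1) · q + 2, where T is the Collatz function. -/
lemma T_even (m : ℕ) : T (2 * m) = m := by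
  simp [T, Nat.mul_div_cancel_left]

lemma T_odd (m : ℕ) : T (2 * m + 1) = 6 * m + 4 := by
  unfold T
  rw [if_neg (by omega)]
  ring

lemma aux (j : ℕ) : ∀ q : ℕ, ∃ k, T^[k] (2 ^ (2 * j + 1) * q + 1) = 2 * 3 ^ j * q + 1 := by
  induction j with
  | zero => intro q; exact ⟨0, by norm_num⟩
  | succ j ih =>
    intro q
    obtain ⟨k, hk⟩ := ih (3 * q)
    refine ⟨k + 3, ?_⟩
    rw [Function.iterate_add_apply]
    have h1 : 2 ^ (2 * (j + 1) + 1) * q + 1 = 2 * (2 ^ (2 * j + 2) * q) + 1 := by ring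
    have h2 : 6 * (2 ^ (2 * j + 2) * q) + 4 = 2 * (3 * 2 ^ (2 * j + 2) * q + 2) := by ring
    have h3 : 3 * 2 ^ (2 * j + 2) * q + 2 = 2 * (3 * 2 ^ (2 * j + 1) * q + 1) := by ring
    have h4 : 3 * 2 ^ (2 * j + 1) * q + 1 = 2 ^ (2 * j + 1) * (3 * q) + 1 := by ring
    show T^[k] (T (T (T _))) = _
    rw [h1, T_odd, h2, T_even, h3, T_even, h4, hk]
    ring

theorem stmt6 (ε q : ℕ) (hε : 1 ≤ ε) (hodd : ε % 2 = 1) (hq : q % 2 = 1) :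
    ∃ k : ℕ, T^[k] (2 ^ ε * q + 1) = 3 ^ ((ε - 1) / 2 + 1) * q + 2 := by
  set j := (ε - 1) / 2 with hj
  have hε' : ε = 2 * j + 1 := by omega
  obtain ⟨k, hk⟩ := aux j q
  refine ⟨2 + k, ?_⟩
  rw [Function.iterate_add_apply, hε', hk]
  show T (T _) = _
  have h1 : 2 * 3 ^ j * q + 1 = 2 * (3 ^ j * q) + 1 := by ring
  have h2 : 6 * (3 ^ j * q) + 4 = 2 * (3 ^ (j + 1) * q + 2) := by ring
  rw [h1, T_odd, h2, T_even]
end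

section
/- For every even natural number a ≥ 2, there exists k ∈ ℕ such that T^k(2^a + 1) = 3^(a/2) + 1, where T is the Collatz function. -/
lemma T3 (y : ℕ) : T^[3] (4*y+1) = 3*y+1 := by
  show T (T (T (4*y+1))) = 3*y+1
  have h1 : T (4*y+1) = 12*y+4 := by simp only [T]; rw [if_neg (by omega)]; omega
  have h2 : T (12*y+4) = 6*y+2 := by simp only [T]; rw [if_pos (by omega)]; omega
  have h3 : T (6*y+2) = 3*y+1 := by simp only [T]; rw [if_pos (by omega)]; omega
  rw [h1, h2, h3]

lemma key (m : ℕ) : ∀ j, T^[3*m] (3^j * 2^(2*m) + 1) = 3^(j+m) + 1 := by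
  induction m with
  | zero => intro j; simp
  | succ m ih =>
    intro j
    have he : 3 * (m+1) = 3 * m + 3 := by ring
    rw [he, Function.iterate_add_apply]
    have h4 : 3^j * 2^(2*(m+1)) + 1 = 4 * (3^j * 2^(2*m)) + 1 := by
      rw [show 2*(m+1) = 2*m + 2 by ring, pow_add]; ring
    have h5 : T^[3] (3^j * 2^(2*(m+1)) + 1) = 3^(j+1) * 2^(2*m) + 1 := by
      rw [h4, T3, pow_succ]; ring
    rw [h5, ih (j+1)]
    congr 1
    ring

theorem stmt7 (a : ℕ) (ha : 2 ≤ a) (heven : a % 2 = 0) :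
    ∃ k : ℕ, T^[k] (2 ^ a + 1) = 3 ^ (a / 2) + 1 := by
  refine ⟨3 * (a / 2), ?_⟩
  have h := key (a / 2) 0
  rw [show 2 * (a / 2) = a by omega] at h
  simpa using h
end

section
/- For every odd natural number a ≥ 1, there exists k ∈ ℕ such that T^k(2^a + 1) = 3^(⌊a/2⌋ + 1) + 2, where T is the Collatz function. -/
lemma aux8 (m : ℕ) : ∀ c : ℕ, ∃ k : ℕ,
    T^[k] (c * 2 ^ (2 * m + 1) + 1) = 3 ^ (m + 1) * c + 2 := by
  induction m with
  | zero =>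
    intro c
    refine ⟨2, ?_⟩
    have h1 : T (c * 2 ^ 1 + 1) = 6 * c + 4 := by
      have e : c * 2 ^ 1 + 1 = 2 * c + 1 := by ring
      rw [T, e, if_neg (by omega)]; ring
    have h2 : T (6 * c + 4) = 3 * c + 2 := by
      rw [T, if_pos (by omega)]; omega
    have : 3 ^ (0 + 1) * c + 2 = 3 * c + 2 := by ring
    rw [this]
    show T (T (c * 2 ^ 1 + 1)) = 3 * c + 2
    rw [h1, h2]
  | succ m ih =>
    intro c
    obtain ⟨k, hk⟩ := ih (3 * c)
    refine ⟨k + 3, ?_⟩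
    set q := c * 2 ^ (2 * m + 1) with hq
    have e0 : c * 2 ^ (2 * (m + 1) + 1) + 1 = 4 * q + 1 := by
      rw [hq]; ring
    have h1 : T (4 * q + 1) = 12 * q + 4 := by
      rw [T, if_neg (by omega)]; ring
    have h2 : T (12 * q + 4) = 6 * q + 2 := by
      rw [T, if_pos (by omega)]; omega
    have h3 : T (6 * q + 2) = 3 * q + 1 := by
      rw [T, if_pos (by omega)]; omega
    rw [Function.iterate_add_apply, e0]
    have h4 : T^[3] (4 * q + 1) = 3 * q + 1 := by
      simp [Function.iterate_succ_apply, h1, h2, h3]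
    rw [h4]
    have e1 : 3 * q + 1 = 3 * c * 2 ^ (2 * m + 1) + 1 := by rw [hq]; ring
    rw [e1, hk]
    ring

theorem stmt8 (a : ℕ) (ha : 1 ≤ a) (hodd : a % 2 = 1) :
    ∃ k : ℕ, T^[k] (2 ^ a + 1) = 3 ^ (a / 2 + 1) + 2 := by
  obtain ⟨m, rfl⟩ : ∃ m, a = 2 * m + 1 := ⟨a / 2, by omega⟩
  obtain ⟨k, hk⟩ := aux8 m 1
  refine ⟨k, ?_⟩
  have : (2 * m + 1) / 2 = m := by omega
  rw [this]
  simpa using hk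
end

section
/- If 1 belongs to the forward orbit of a positive integer m under the Collatz function and m is not a power of 2, then m has property R: there exist k ∈ ℕ and naturals a_0 ≤ a_1 ≤ ⋯ ≤ a_{k+1} with 3^(k+1)·m = 2^(a_{k+1}) - ∑_{i=0}^{k} 2^(a_i)·3^(k-i). -/
def PropR (m : ℕ) : Prop :=
  ∃ k : ℕ, ∃ a : ℕ → ℕ,
    (∀ i, i ≤ k → a i ≤ a (i + 1)) ∧
    (3 : ℤ) ^ (k + 1) * m =
      2 ^ a (k + 1) - ∑ i ∈ Finset.range (k + 1), 2 ^ a i * 3 ^ (k - i)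

theorem propR_two_pow (c : ℕ) : PropR (2 ^ c) :=
  ⟨0, fun i => c + 2 * i, fun _ _ => by dsimp only; omega, by push_cast; simp; ring⟩

theorem PropR.two_mul {m : ℕ} (h : PropR m) : PropR (2 * m) := by
  obtain ⟨k, a, hmono, heq⟩ := h
  refine ⟨k, (a · + 1), fun i hi => Nat.succ_le_succ (hmono i hi), ?_⟩
  push_cast
  rw [mul_left_comm, heq, mul_sub, Finset.mul_sum]
  simp only [pow_succ]
  ring_nf

theorem PropR.of_three_mul_add_one {m : ℕ} (h : PropR (3 * m + 1)) : PropR m := by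
  obtain ⟨k, a, hmono, heq⟩ := h
  refine ⟨k + 1, fun i => if i = 0 then 0 else a (i - 1), ?_, ?_⟩
  · rintro (_ | i) hi
    · simp
    · simpa using hmono i (by omega)
  · have hsum : ∑ i ∈ Finset.range (k + 2),
        (2 : ℤ) ^ (if i = 0 then 0 else a (i - 1)) * 3 ^ (k + 1 - i)
        = ∑ i ∈ Finset.range (k + 1), (2 : ℤ) ^ a i * 3 ^ (k - i) + 3 ^ (k + 1) := by
      rw [Finset.sum_range_succ']
      simp
    push_cast at heq
    simp only [Nat.add_sub_cancel, if_neg (Nat.succ_ne_zero (k + 1)), hsum]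
    linear_combination heq

theorem PropR.of_T {m : ℕ} (h : PropR (T m)) : PropR m := by
  unfold T at h
  split_ifs at h with heven
  · simpa [Nat.two_mul_div_two_of_even (Nat.even_iff.mpr heven)] using h.two_mul
  · exact h.of_three_mul_add_one

theorem stmt14_general (m : ℕ) (h1 : ∃ j : ℕ, T^[j] m = 1) : PropR m := by
  obtain ⟨j, hj⟩ := h1
  induction j generalizing m with
  | zero => simpa [show m = 1 from hj] using propR_two_pow 0
  | succ j ih => exact PropR.of_T (ih (T m) (by rwa [Function.iterate_succ_apply] at hj))

theorem stmt14 (m : ℕ) (hm : 0 < m) (h1 : ∃ j : ℕ, T^[j] m = 1)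
    (hpow : ∀ j : ℕ, m ≠ 2 ^ j) : PropR m :=
  stmt14_general m h1
end
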